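/- arXiv:1404.2659 — 3 statements merged into one kernel-verified Lean document; each statement's English description precedes it below -/
import Mathlib

section
/- Let f : (Fin n → ℤ) → Λ converge on S, let p ∈ S, and let b : Fin n → Λˣ be units of Λ with (↑(b i)).order = 0 for every i. Define e A := f A * (HahnSeries.single ⟨p,A⟩ 1) * ∏ i, ((b i)^(A i) : Λ), using integer powers in the unit group. Then for every E ∈ ℝ the set {A | e A ≠ 0 ∧ (e A).order ≤ E} is finite; hence the family e underlies a HahnSeries.SummableFamily and the evaluation ∑_A f A · t^{⟨p,A⟩} · b^A is a well-defined element of Λ. (This is the assertion that elements of the affinoid ring O_P converge T-adically at every point (p,b) of Y_P.) -/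
/-- The pairing `⟨v, A⟩ = ∑ i, v i * A i` between a real vector and an integral vector. -/
noncomputable def pairing (n : ℕ) (v : Fin n → ℝ) (A : Fin n → ℤ) : ℝ :=
  ∑ i, v i * (A i : ℝ)

/-- A family `f : (Fin n → ℤ) → Λ` converges on a set `S ⊆ ℝⁿ` if for every `v ∈ S` and
every `E ∈ ℝ` only finitely many nonzero terms satisfy `val(f A) + ⟨v, A⟩ ≤ E`. -/
def ConvergesOn (k : Type*) [Field k] (n : ℕ) (f : (Fin n → ℤ) → HahnSeries ℝ k)
    (S : Set (Fin n → ℝ)) : Prop :=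
  ∀ v ∈ S, ∀ E : ℝ, {A : Fin n → ℤ | f A ≠ 0 ∧ (f A).order + pairing n v A ≤ E}.Finite

/-!
The units `b i` have order `0` and `t^{⟨p,A⟩}` has order `⟨p,A⟩`, so the order of the `A`-th
term of the evaluation is exactly `val(f A) + ⟨p,A⟩`; convergence of `f` at `p` therefore says
that only finitely many terms have order below any bound. Such a family is summable: below any
bound `E` the union of the supports is covered by finitely many well-ordered supports.
-/

theorem Set.isWF_of_forall_inter_Iic {α : Type*} [Preorder α] {s : Set α}
    (h : ∀ a ∈ s, (s ∩ Set.Iic a).IsWF) : s.IsWF := by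
  rw [Set.isWF_iff_no_descending_seq]
  intro g hg hmem
  exact Set.isWF_iff_no_descending_seq.mp (h (g 0) (hmem 0)) g hg
    fun m => ⟨hmem m, hg.antitone (Nat.zero_le m)⟩

namespace HahnSeries

section Summable

variable {Γ R α : Type*} [LinearOrder Γ] [Zero Γ] [AddCommMonoid R] {x : α → HahnSeries Γ R}

theorem isPWO_iUnion_support_of_finite_order_le
    (hx : ∀ E, {a | x a ≠ 0 ∧ (x a).order ≤ E}.Finite) : (⋃ a, (x a).support).IsPWO := by
  refine (Set.isWF_of_forall_inter_Iic fun E _ => ?_).isPWO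
  refine (((Finset.isPWO_bUnion (hx E).toFinset).2 fun a _ => (x a).isPWO_support).mono ?_).isWF
  rintro g ⟨hg, hgE⟩
  obtain ⟨a, ha⟩ := Set.mem_iUnion.1 hg
  exact Set.mem_biUnion ((hx E).mem_toFinset.2
    ⟨ne_zero_of_coeff_ne_zero ha, (order_le_of_coeff_ne_zero ha).trans hgE⟩) ha

theorem finite_coeff_ne_zero_of_finite_order_le
    (hx : ∀ E, {a | x a ≠ 0 ∧ (x a).order ≤ E}.Finite) (g : Γ) :
    {a | (x a).coeff g ≠ 0}.Finite :=
  (hx g).subset fun _ ha => ⟨ne_zero_of_coeff_ne_zero ha, order_le_of_coeff_ne_zero ha⟩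

def SummableFamily.ofFiniteOrderLE (x : α → HahnSeries Γ R)
    (hx : ∀ E, {a | x a ≠ 0 ∧ (x a).order ≤ E}.Finite) : SummableFamily Γ R α :=
  ⟨x, isPWO_iUnion_support_of_finite_order_le hx, finite_coeff_ne_zero_of_finite_order_le hx⟩

end Summable

section Order

variable {Γ R : Type*} [AddCommGroup Γ] [LinearOrder Γ] [IsOrderedAddMonoid Γ] [CommRing R]
  [IsDomain R]

variable (R) in
noncomputable def unitsOrderHom :
    (HahnSeries Γ R)ˣ →* Multiplicative Γ where
  toFun u := Multiplicative.ofAdd (u : HahnSeries Γ R).order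
  map_one' := by rw [Units.val_one, order_one, ofAdd_zero]
  map_mul' u w := by rw [Units.val_mul, order_mul u.ne_zero w.ne_zero, ofAdd_add]

theorem order_prod_units_zpow {ι : Type*} (s : Finset ι)
    (u : ι → (HahnSeries Γ R)ˣ) (m : ι → ℤ) :
    ((∏ i ∈ s, u i ^ m i : (HahnSeries Γ R)ˣ) : HahnSeries Γ R).order =
      ∑ i ∈ s, m i • (u i : HahnSeries Γ R).order := by
  change Multiplicative.toAdd (unitsOrderHom R (∏ i ∈ s, u i ^ m i)) = _
  simp only [map_prod, map_zpow, toAdd_prod, toAdd_zpow]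
  rfl

theorem order_mul_single_one_mul_units {x : HahnSeries Γ R} (hx : x ≠ 0)
    (g : Γ) {u : (HahnSeries Γ R)ˣ} (hu : (u : HahnSeries Γ R).order = 0) :
    (x * single g 1 * (u : HahnSeries Γ R)).order = x.order + g := by
  have hsingle : single g (1 : R) ≠ 0 := single_ne_zero one_ne_zero
  rw [order_mul (mul_ne_zero hx hsingle) u.ne_zero, order_mul hx hsingle, hu, add_zero,
    order_single one_ne_zero]

end Order

end HahnSeries

open HahnSeries

/-- Elements of the affinoid ring `O_P` converge T-adically at every point `(p, b)` of
`Y_P`: if `f` converges on `S`, `p ∈ S` and `b` is a tuple of units of order `0`, then the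
family `e A = f A · t^{⟨p,A⟩} · b^A` has orders tending to `+∞`, hence underlies a
`HahnSeries.SummableFamily` and its sum is a well-defined element of `Λ`. -/
theorem evaluation_at_point_converges (k : Type*) [Field k] (n : ℕ)
    (S : Set (Fin n → ℝ)) (f : (Fin n → ℤ) → HahnSeries ℝ k)
    (hf : ConvergesOn k n f S) (p : Fin n → ℝ) (hp : p ∈ S)
    (b : Fin n → (HahnSeries ℝ k)ˣ)
    (hb : ∀ i, ((b i : (HahnSeries ℝ k)ˣ) : HahnSeries ℝ k).order = 0)
    (e : (Fin n → ℤ) → HahnSeries ℝ k)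
    (he : ∀ A, e A = f A * HahnSeries.single (pairing n p A) 1 *
      ∏ i, ((b i ^ (A i) : (HahnSeries ℝ k)ˣ) : HahnSeries ℝ k)) :
    (∀ E : ℝ, {A : Fin n → ℤ | e A ≠ 0 ∧ (e A).order ≤ E}.Finite) ∧
    ∃ s : HahnSeries.SummableFamily ℝ k (Fin n → ℤ), ∀ A, s A = e A := by
  have hord : ∀ A, f A ≠ 0 → (e A).order = (f A).order + pairing n p A := fun A hfA => by
    rw [he, ← Units.coe_prod, order_mul_single_one_mul_units hfA _
      (by simp only [order_prod_units_zpow, hb, smul_zero, Finset.sum_const_zero])]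
  have hfin : ∀ E : ℝ, {A | e A ≠ 0 ∧ (e A).order ≤ E}.Finite := fun E => by
    refine (hf p hp E).subset fun A ⟨heA, hle⟩ => ?_
    have hfA : f A ≠ 0 := fun h => heA (by rw [he, h, zero_mul, zero_mul])
    exact ⟨hfA, hord A hfA ▸ hle⟩
  exact ⟨hfin, SummableFamily.ofFiniteOrderLE e hfin, fun _ => rfl⟩
end

section
/- Let f, g : (Fin n → ℤ) → Λ converge on S and let v₀ ∈ S. Then: (i) for every A : Fin n → ℤ and every E ∈ ℝ the set {B | f B * g (A − B) ≠ 0 ∧ (f B * g (A − B)).order ≤ E} is finite, so that the convolution coefficient h A := ∑_B f B * g (A − B) is a well-defined element of Λ (as the sum of a HahnSeries.SummableFamily); (ii) the resulting family h converges on S; and (iii) the pointwise sum f + g converges on S. (This is the assertion that the convergent series on an integral affine polytope form the affinoid ring O_P.) -/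
/-!
The order of a product of Hahn series is the sum of the orders, and `⟨v, ·⟩` is additive, so
the weighted order `val (f B * g C) + ⟨v, B + C⟩` splits as the sum of the weighted orders of
`f B` and `g C`. Since a convergent family has weighted orders bounded below, a bound on the
weighted order of a product bounds that of each factor, and only finitely many pairs `(B, C)`
remain. Taken at a single `v₀`, this makes each convolution coefficient a summable family;
taken at every `v ∈ S`, it gives convergence of the convolution.
-/

open HahnSeries

theorem exists_forall_le_of_finite_sublevel {α ι : Type*} [LinearOrder α] {p : ι → Prop}
    {w : ι → α} {E : α} (h : {i | p i ∧ w i ≤ E}.Finite) :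
    ∃ m, ∀ i, p i → m ≤ w i := by
  have : Nonempty α := ⟨E⟩
  obtain ⟨m, hm⟩ := (h.image w).bddBelow
  refine ⟨min m E, fun i hi => ?_⟩
  by_cases hle : w i ≤ E
  · exact (min_le_left _ _).trans (hm ⟨i, ⟨hi, hle⟩, rfl⟩)
  · exact (min_le_right _ _).trans (le_of_not_ge hle)

namespace HahnSeries.SummableFamily

variable {Γ R ι : Type*} [Zero Γ] [LinearOrder Γ] [AddCommMonoid R]

def ofFiniteSublevels (x : ι → HahnSeries Γ R)
    (hx : ∀ E, {i | x i ≠ 0 ∧ (x i).order ≤ E}.Finite) : SummableFamily Γ R ι where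
  toFun := x
  isPWO_iUnion_support' := by
    rw [Set.isPWO_iff_isWF, Set.isWF_iff_no_descending_seq]
    intro u hu hmem
    have hfin := hx (u 0)
    have hwf : (⋃ i ∈ hfin.toFinset, (x i).support).IsWF :=
      (Finset.isWF_bUnion _).2 fun i _ => (x i).isWF_support
    refine Set.isWF_iff_no_descending_seq.1 hwf u hu fun j => ?_
    obtain ⟨i, hi⟩ := Set.mem_iUnion.1 (hmem j)
    have hle : (x i).order ≤ u 0 := (order_le_of_coeff_ne_zero hi).trans (hu.antitone j.zero_le)
    exact Set.mem_biUnion (hfin.mem_toFinset.2 ⟨ne_zero_of_coeff_ne_zero hi, hle⟩) hi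
  finite_co_support' g := (hx g).subset fun _ hi =>
    ⟨ne_zero_of_coeff_ne_zero hi, order_le_of_coeff_ne_zero hi⟩

theorem exists_ne_zero_order_le_order_hsum (s : SummableFamily Γ R ι) (hs : s.hsum ≠ 0) :
    ∃ i, s i ≠ 0 ∧ (s i).order ≤ s.hsum.order := by
  obtain ⟨i, hi⟩ := Set.mem_iUnion.1 (support_hsum_subset (coeff_order_eq_zero.not.2 hs))
  exact ⟨i, ne_zero_of_coeff_ne_zero hi, order_le_of_coeff_ne_zero hi⟩

end HahnSeries.SummableFamily

section ConvergesAt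

variable {Γ R M : Type*} [AddCommGroup Γ] [LinearOrder Γ]

/-- `ConvergesOn k n f S` says `ConvergesAt f (pairing n v)` for every `v ∈ S`. -/
def ConvergesAt [Zero R] (f : M → HahnSeries Γ R) (φ : M → Γ) : Prop :=
  ∀ E, {A | f A ≠ 0 ∧ (f A).order + φ A ≤ E}.Finite

namespace ConvergesAt

theorem exists_le [Zero R] {f : M → HahnSeries Γ R} {φ : M → Γ} (hf : ConvergesAt f φ) :
    ∃ m, ∀ A, f A ≠ 0 → m ≤ (f A).order + φ A :=
  exists_forall_le_of_finite_sublevel (hf 0)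

variable [IsOrderedAddMonoid Γ]

theorem add [AddMonoid R] {f g : M → HahnSeries Γ R} {φ : M → Γ} (hf : ConvergesAt f φ)
    (hg : ConvergesAt g φ) : ConvergesAt (f + g) φ := by
  intro E
  refine ((hf E).union (hg E)).subset fun A ⟨hne, hle⟩ => ?_
  rw [Pi.add_apply] at hne hle
  by_cases hfA : f A = 0
  · rw [hfA, zero_add] at hne hle
    exact Or.inr ⟨hne, hle⟩
  by_cases hgA : g A = 0
  · rw [hgA, add_zero] at hne hle
    exact Or.inl ⟨hfA, hle⟩
  have hmin := (add_le_add (min_order_le_order_add hne) le_rfl).trans hle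
  rcases min_choice (f A).order (g A).order with h | h <;> rw [h] at hmin
  · exact Or.inl ⟨hfA, hmin⟩
  · exact Or.inr ⟨hgA, hmin⟩

variable [AddCommGroup M] [NonUnitalNonAssocSemiring R] [NoZeroDivisors R]
  {f g : M → HahnSeries Γ R} {φ : M →+ Γ}

theorem order_mul_sub_add {A B : M} (hfB : f B ≠ 0) (hgB : g (A - B) ≠ 0) :
    (f B * g (A - B)).order + φ A =
      ((f B).order + φ B) + ((g (A - B)).order + φ (A - B)) := by
  have hφ : φ A = φ B + φ (A - B) := by rw [← map_add, add_sub_cancel]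
  rw [order_mul hfB hgB, hφ]
  abel

theorem finite_mul_sub (hf : ConvergesAt f φ) (hg : ConvergesAt g φ) (A : M) (E : Γ) :
    {B | f B * g (A - B) ≠ 0 ∧ (f B * g (A - B)).order ≤ E}.Finite := by
  obtain ⟨m, hm⟩ := hg.exists_le
  refine (hf (E + φ A - m)).subset fun B ⟨hne, hle⟩ => ?_
  have hfB := left_ne_zero_of_mul hne
  have hgB := right_ne_zero_of_mul hne
  have hsum : ((f B).order + φ B) + ((g (A - B)).order + φ (A - B)) ≤ E + φ A := by
    rw [← order_mul_sub_add hfB hgB]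
    exact add_le_add hle le_rfl
  exact ⟨hfB, le_sub_iff_add_le.2 ((add_le_add le_rfl (hm _ hgB)).trans hsum)⟩

theorem hsum_mul_sub (hf : ConvergesAt f φ) (hg : ConvergesAt g φ)
    (s : M → SummableFamily Γ R M) (hs : ∀ A B, s A B = f B * g (A - B)) :
    ConvergesAt (fun A => (s A).hsum) φ := by
  intro E
  obtain ⟨mf, hmf⟩ := hf.exists_le
  obtain ⟨mg, hmg⟩ := hg.exists_le
  refine (((hf (E - mg)).prod (hg (E - mf))).image fun p => p.1 + p.2).subset
    fun A ⟨hne, hle⟩ => ?_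
  obtain ⟨B, hB, hBle⟩ := (s A).exists_ne_zero_order_le_order_hsum hne
  rw [hs] at hB hBle
  have hfB := left_ne_zero_of_mul hB
  have hgB := right_ne_zero_of_mul hB
  have hsum : ((f B).order + φ B) + ((g (A - B)).order + φ (A - B)) ≤ E := by
    rw [← order_mul_sub_add hfB hgB]
    exact (add_le_add hBle le_rfl).trans hle
  refine ⟨(B, A - B), ⟨⟨hfB, ?_⟩, ⟨hgB, ?_⟩⟩, add_sub_cancel B A⟩
  · exact le_sub_iff_add_le.2 ((add_le_add le_rfl (hmg _ hgB)).trans hsum)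
  · exact le_sub_iff_add_le'.2 ((add_le_add (hmf _ hfB) le_rfl).trans hsum)

end ConvergesAt

end ConvergesAt

noncomputable def pairingHom (n : ℕ) (v : Fin n → ℝ) : (Fin n → ℤ) →+ ℝ :=
  AddMonoidHom.mk' (pairing n v) fun B C => by
    simp only [pairing, Pi.add_apply, Int.cast_add, mul_add, Finset.sum_add_distrib]

/-- Convergent series on a set `S` (containing a point `v₀`) form a ring: (i) each
convolution coefficient `h A = ∑_B f B * g (A - B)` is the well-defined sum of a summable
family; (ii) the convolution `h` converges on `S`; (iii) the pointwise sum `f + g`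
converges on `S`. This is the assertion that the convergent series on an integral affine
polytope form the affinoid ring `O_P`. -/
theorem convergent_series_form_ring (k : Type*) [Field k] (n : ℕ)
    (S : Set (Fin n → ℝ)) (f g : (Fin n → ℤ) → HahnSeries ℝ k)
    (hf : ConvergesOn k n f S) (hg : ConvergesOn k n g S)
    (v₀ : Fin n → ℝ) (hv₀ : v₀ ∈ S) :
    (∀ (A : Fin n → ℤ) (E : ℝ),
      {B : Fin n → ℤ | f B * g (A - B) ≠ 0 ∧ (f B * g (A - B)).order ≤ E}.Finite) ∧
    (∃ s : (Fin n → ℤ) → HahnSeries.SummableFamily ℝ k (Fin n → ℤ),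
      (∀ A B, s A B = f B * g (A - B)) ∧
      ConvergesOn k n (fun A => (s A).hsum) S) ∧
    ConvergesOn k n (fun A => f A + g A) S := by
  have hfv (v) (hv : v ∈ S) : ConvergesAt f (pairingHom n v) := hf v hv
  have hgv (v) (hv : v ∈ S) : ConvergesAt g (pairingHom n v) := hg v hv
  have hfinite := (hfv v₀ hv₀).finite_mul_sub (hgv v₀ hv₀)
  let s A := SummableFamily.ofFiniteSublevels _ (hfinite A)
  have hs A B : s A B = f B * g (A - B) := rfl
  exact ⟨hfinite, ⟨s, hs, fun v hv => (hfv v hv).hsum_mul_sub (hgv v hv) s hs⟩,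
    fun v hv => (hfv v hv).add (hgv v hv)⟩
end

section
/- Let f, g : (Fin n → ℤ) → Λ converge on S, let p ∈ S, and let b : Fin n → Λˣ be units with (↑(b i)).order = 0 for all i. Let h A := ∑_B f B * g (A − B) denote the convolution product (well defined as a sum of a HahnSeries.SummableFamily), and for a family u write ev(u) := ∑_A u A * (HahnSeries.single ⟨p,A⟩ 1) * ∏ i ((b i)^(A i) : Λ), the evaluation at (p,b) (again a well-defined sum of a summable family). Then ev(h) = ev(f) * ev(g). (This is the statement that evaluation at a point (p,b) of Y_P is a ring homomorphism from the affinoid ring O_P to Λ, underlying the specialization isomorphism of Equation (iso_modules).) -/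
/-!
Writing `m A := t^{⟨p,A⟩} b^A`, the map `A ↦ m A` is multiplicative, so the `B`-th term of the
`A`-th coefficient sum of `ev(f * g)` is `(f B · m B) · (g (A - B) · m (A - B))`. Hence `ev(f * g)`
is an iterated sum of the product family `(sf B · sg C)_{B,C}`, reindexed along
`(B, C) ↦ (B + C, B)`, and summing a summable family iteratively gives its total sum.
-/

open HahnSeries

namespace HahnSeries.SummableFamily

theorem hsum_eq_hsum_of_curry {Γ R α β : Type*} [PartialOrder Γ] [AddCommMonoid R]
    (u : SummableFamily Γ R (α × β)) (c : α → SummableFamily Γ R β)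
    (hc : ∀ a b, c a b = u (a, b)) (d : SummableFamily Γ R α) (hd : ∀ a, d a = (c a).hsum) :
    d.hsum = u.hsum := by
  ext x
  simp only [coeff_hsum, hd, hc]
  exact (finsum_curry _ (u.finite_co_support x)).symm

theorem hsum_convolution_eq_hsum_mul {Γ R ι : Type*} [AddCommMonoid Γ] [PartialOrder Γ]
    [IsOrderedCancelAddMonoid Γ] [Semiring R] [AddCommGroup ι]
    (s t : SummableFamily Γ R ι) (c : ι → SummableFamily Γ R ι)
    (hc : ∀ A B, c A B = s B * t (A - B)) (d : SummableFamily Γ R ι)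
    (hd : ∀ A, d A = (c A).hsum) :
    d.hsum = s.hsum * t.hsum := by
  let e : ι × ι ≃ ι × ι :=
    { toFun := fun q => (q.1 + q.2, q.1)
      invFun := fun q => (q.2, q.1 - q.2)
      left_inv := fun q => by simp
      right_inv := fun q => by simp }
  rw [← hsum_mul, ← hsum_equiv e]
  exact hsum_eq_hsum_of_curry _ c hc d hd

end HahnSeries.SummableFamily

theorem pairing_add (n : ℕ) (v : Fin n → ℝ) (A B : Fin n → ℤ) :
    pairing n v (A + B) = pairing n v A + pairing n v B := by
  simp only [pairing, Pi.add_apply, Int.cast_add, mul_add, Finset.sum_add_distrib]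

noncomputable def evalMonomial (k : Type*) [CommRing k] (n : ℕ) (p : Fin n → ℝ)
    (b : Fin n → (HahnSeries ℝ k)ˣ) (A : Fin n → ℤ) : HahnSeries ℝ k :=
  single (pairing n p A) 1 * ∏ i, ((b i ^ (A i) : (HahnSeries ℝ k)ˣ) : HahnSeries ℝ k)

theorem evalMonomial_add (k : Type*) [CommRing k] (n : ℕ) (p : Fin n → ℝ)
    (b : Fin n → (HahnSeries ℝ k)ˣ) (A B : Fin n → ℤ) :
    evalMonomial k n p b (A + B) = evalMonomial k n p b A * evalMonomial k n p b B := by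
  rw [evalMonomial, pairing_add, ← one_mul (1 : k), ← single_mul_single]
  simp only [Pi.add_apply, zpow_add, Units.val_mul, Finset.prod_mul_distrib, evalMonomial]
  ring

theorem evaluation_is_multiplicative_general (k : Type*) [Field k] (n : ℕ)
    (f g : (Fin n → ℤ) → HahnSeries ℝ k)
    (p : Fin n → ℝ)
    (b : Fin n → (HahnSeries ℝ k)ˣ) :
    ∀ sConv : (Fin n → ℤ) → HahnSeries.SummableFamily ℝ k (Fin n → ℤ),
      (∀ A B, sConv A B = f B * g (A - B)) →
      ∀ sf sg sh : HahnSeries.SummableFamily ℝ k (Fin n → ℤ),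
        (∀ A, sf A = f A * HahnSeries.single (pairing n p A) 1 *
          ∏ i, ((b i ^ (A i) : (HahnSeries ℝ k)ˣ) : HahnSeries ℝ k)) →
        (∀ A, sg A = g A * HahnSeries.single (pairing n p A) 1 *
          ∏ i, ((b i ^ (A i) : (HahnSeries ℝ k)ˣ) : HahnSeries ℝ k)) →
        (∀ A, sh A = (sConv A).hsum * HahnSeries.single (pairing n p A) 1 *
          ∏ i, ((b i ^ (A i) : (HahnSeries ℝ k)ˣ) : HahnSeries ℝ k)) →
        sh.hsum = sf.hsum * sg.hsum := by
  intro sConv hConv sf sg sh hsf hsg hsh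
  set m := evalMonomial k n p b
  refine SummableFamily.hsum_convolution_eq_hsum_mul sf sg (fun A => m A • sConv A) ?_ sh ?_
  · intro A B
    have hm : m A = m B * m (A - B) := by rw [← evalMonomial_add, add_sub_cancel]
    rw [SummableFamily.smul_apply, of_symm_smul_of_eq_mul, hConv, hsf, hsg, hm]
    simp only [m, evalMonomial]
    ring
  · intro A
    rw [hsh, SummableFamily.hsum_smul]
    simp only [m, evalMonomial]
    ring

/-- Evaluation at a point `(p, b)` of `Y_P` is multiplicative: if `h` is the convolution
product of `f` and `g` (each coefficient being the sum of a summable family), and `ev(u)`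
denotes the sum `∑_A u A · t^{⟨p,A⟩} · b^A` (again the sum of a summable family), then
`ev(h) = ev(f) * ev(g)`. This is the statement that evaluation at a point of `Y_P` is a
ring homomorphism from the affinoid ring `O_P` to `Λ`. -/
theorem evaluation_is_multiplicative (k : Type*) [Field k] (n : ℕ)
    (S : Set (Fin n → ℝ)) (f g : (Fin n → ℤ) → HahnSeries ℝ k)
    (hf : ConvergesOn k n f S) (hg : ConvergesOn k n g S)
    (p : Fin n → ℝ) (hp : p ∈ S)
    (b : Fin n → (HahnSeries ℝ k)ˣ)
    (hb : ∀ i, ((b i : (HahnSeries ℝ k)ˣ) : HahnSeries ℝ k).order = 0) :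
    ∀ sConv : (Fin n → ℤ) → HahnSeries.SummableFamily ℝ k (Fin n → ℤ),
      (∀ A B, sConv A B = f B * g (A - B)) →
      ∀ sf sg sh : HahnSeries.SummableFamily ℝ k (Fin n → ℤ),
        (∀ A, sf A = f A * HahnSeries.single (pairing n p A) 1 *
          ∏ i, ((b i ^ (A i) : (HahnSeries ℝ k)ˣ) : HahnSeries ℝ k)) →
        (∀ A, sg A = g A * HahnSeries.single (pairing n p A) 1 *
          ∏ i, ((b i ^ (A i) : (HahnSeries ℝ k)ˣ) : HahnSeries ℝ k)) →
        (∀ A, sh A = (sConv A).hsum * HahnSeries.single (pairing n p A) 1 *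
          ∏ i, ((b i ^ (A i) : (HahnSeries ℝ k)ˣ) : HahnSeries ℝ k)) →
        sh.hsum = sf.hsum * sg.hsum :=
  evaluation_is_multiplicative_general k n f g p b
end
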